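/- Let G be a connected Eulerian digraph, let ←G be the digraph obtained by reversing every edge, and let v_0 be any vertex. Then the greedoid polynomial of the directed branching greedoid of G rooted at v_0 equals that of ←G rooted at v_0. -/

import Mathlib

/-!
Faces of the dual complex are the complements of the edge sets `S` from which every vertex can be
reached from `v₀`, so it suffices to compare weighted counts of such root-connected `S` in `G` and
in `←G`. Call `ℓ : V → {0, …, k}` a layering if `v₀` lies on the top layer `k` and no layer is
empty. By a sign-reversing involution, the signed count `∑ (-1) ^ k` of the layerings along which
every edge of `S` weakly ascends is `1` if `S` is root-connected and `0` otherwise. Exchanging the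
two sums turns the weighted count into a signed sum over layerings of a function of the number of
weakly ascending edges. Reversing the order of the layers below the top one turns the weak ascents
of `G` into those of `←G`, except that edges entering the top layer are traded for edges leaving
it; these are equally many because every vertex has equal in- and out-degree.
-/

open Finset

section

variable {V E : Type*}

/-- Reachability from `u` to `v` using directed edges from the edge set `F`. -/
def ReachableIn [Fintype E] (tail head : E → V) (F : Finset E) (u v : V) : Prop :=
  Relation.ReflTransGen (fun a b => ∃ e ∈ F, tail e = a ∧ head e = b) u v

/-- `F` is a spanning arborescence rooted at `v₀`. -/
def IsArborescence [Fintype V] [Fintype E] (tail head : E → V) (F : Finset E) (v₀ : V) :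
    Prop :=
  (∀ v : V, ReachableIn tail head F v₀ v) ∧ F.card + 1 = Fintype.card V

open Classical in
/-- The greedoid polynomial of the directed branching greedoid of the digraph
`(tail, head)` rooted at `v₀`, evaluated at `x`: the `h`-polynomial `f(x-1)` of the dual
complex, whose faces are the subsets of `E` disjoint from some spanning arborescence
rooted at `v₀`. -/
noncomputable def greedoidPolyEval [Fintype V] [Fintype E]
    (tail head : E → V) (v₀ : V) (x : ℝ) : ℝ :=
  ∑ X ∈ Finset.univ.filter
      (fun X : Finset E => ∃ F : Finset E, IsArborescence tail head F v₀ ∧ Disjoint X F),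
    (x - 1) ^ (Fintype.card E + 1 - Fintype.card V - X.card)

namespace ReachableIn

variable [Fintype E] {tail head : E → V} {S T : Finset E} {u v : V}

theorem mono (hST : S ⊆ T) (h : ReachableIn tail head S u v) : ReachableIn tail head T u v :=
  Relation.ReflTransGen.mono (p := fun a b => ∃ e ∈ T, tail e = a ∧ head e = b)
    (fun _ _ ⟨e, he, hte, hhe⟩ => ⟨e, hST he, hte, hhe⟩) _ _ h

theorem le_of_forall_le {α : Type*} [Preorder α] {f : V → α}
    (hS : ∀ e ∈ S, f (tail e) ≤ f (head e)) (h : ReachableIn tail head S u v) : f u ≤ f v := by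
  induction h with
  | refl => exact le_rfl
  | tail _ hstep ih =>
    obtain ⟨e, he, rfl, rfl⟩ := hstep
    exact ih.trans (hS e he)

theorem exists_crossing {U : Set V} (h : ReachableIn tail head S u v) (hu : u ∈ U)
    (hv : v ∉ U) : ∃ e ∈ S, tail e ∈ U ∧ head e ∉ U := by
  by_contra! hclosed
  -- `Prop` is ordered by implication
  exact hv (h.le_of_forall_le (f := (· ∈ U)) hclosed hu)

end ReachableIn

namespace BranchingGreedoid

open scoped Classical

def RootConnected [Fintype E] (tail head : E → V) (v₀ : V) (S : Finset E) : Prop :=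
  ∀ v, ReachableIn tail head S v₀ v

section Arborescence

variable [Fintype E] (tail head : E → V) (v₀ : V)

/-- The cardinality condition says that the heads of the edges of `F` are distinct and differ
from `v₀`. -/
def IsPartialArborescence (F : Finset E) : Prop :=
  (∀ v ∈ insert v₀ (F.image head), ReachableIn tail head F v₀ v) ∧
    #F + 1 = #(insert v₀ (F.image head))

theorem isPartialArborescence_empty : IsPartialArborescence tail head v₀ ∅ := by
  simp [IsPartialArborescence, ReachableIn, Relation.ReflTransGen.refl]

variable {tail head v₀}

theorem IsPartialArborescence.extend {F : Finset E} (hF : IsPartialArborescence tail head v₀ F)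
    {e : E} (hte : tail e ∈ insert v₀ (F.image head)) (hhe : head e ∉ insert v₀ (F.image head)) :
    IsPartialArborescence tail head v₀ (insert e F) := by
  have heF : e ∉ F := fun he => hhe (mem_insert_of_mem (mem_image_of_mem head he))
  have hverts : insert v₀ ((insert e F).image head) =
      insert (head e) (insert v₀ (F.image head)) := by
    rw [image_insert, Finset.insert_comm]
  have hreach w (hw : w ∈ insert v₀ (F.image head)) : ReachableIn tail head (insert e F) v₀ w :=
    (hF.1 w hw).mono (subset_insert e F)
  refine ⟨?_, ?_⟩
  · rw [hverts]
    intro v hv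
    rcases mem_insert.1 hv with rfl | hv
    · exact (hreach _ hte).tail ⟨e, mem_insert_self e F, rfl, rfl⟩
    · exact hreach v hv
  · rw [hverts, card_insert_of_notMem heF, card_insert_of_notMem hhe, hF.2]

theorem exists_arborescence_subset [Fintype V] {S : Finset E}
    (hS : RootConnected tail head v₀ S) : ∃ F ⊆ S, IsArborescence tail head F v₀ := by
  obtain ⟨F, hF, hmax⟩ := exists_max_image (S.powerset.filter (IsPartialArborescence tail head v₀))
    card ⟨∅, by simp [isPartialArborescence_empty]⟩
  rw [mem_filter, mem_powerset] at hF
  obtain ⟨hFS, hFarb⟩ := hF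
  -- a maximal partial arborescence inside `S` cannot be extended by a crossing edge
  have hall : insert v₀ (F.image head) = univ := by
    refine eq_univ_of_forall fun v => ?_
    by_contra hv
    obtain ⟨e, heS, hte, hhe⟩ :=
      (hS v).exists_crossing (U := ↑(insert v₀ (F.image head))) (mem_insert_self v₀ _) hv
    have heF : e ∉ F := fun he => hhe (mem_insert_of_mem (mem_image_of_mem head he))
    have := hmax (insert e F) (mem_filter.2 ⟨mem_powerset.2 (insert_subset heS hFS),
      hFarb.extend hte hhe⟩)
    rw [card_insert_of_notMem heF] at this
    omega
  exact ⟨F, hFS, fun v => hFarb.1 v (hall ▸ mem_univ v), by rw [hFarb.2, hall, card_univ]⟩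

theorem exists_arborescence_disjoint_iff [Fintype V] (X : Finset E) :
    (∃ F, IsArborescence tail head F v₀ ∧ Disjoint X F) ↔ RootConnected tail head v₀ Xᶜ := by
  constructor
  · rintro ⟨F, hF, hXF⟩ v
    exact (hF.1 v).mono (subset_compl_iff_disjoint_left.2 hXF)
  · intro hX
    obtain ⟨F, hFX, hF⟩ := exists_arborescence_subset hX
    exact ⟨F, hF, subset_compl_iff_disjoint_left.1 hFX⟩

theorem greedoidPolyEval_eq_sum_rootConnected [Fintype V] (x : ℝ) :
    greedoidPolyEval tail head v₀ x = ∑ S ∈ univ.filter (RootConnected tail head v₀),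
      (x - 1) ^ (#S + 1 - Fintype.card V) := by
  unfold greedoidPolyEval
  simp_rw [exists_arborescence_disjoint_iff]
  refine sum_nbij' compl compl (by simp) (by simp) (by simp) (by simp) fun X _ => ?_
  have := card_le_univ X
  rw [card_compl]
  congr 1
  omega

end Arborescence

section Layering

def IsLayering (v₀ : V) (ℓ : V → ℕ) : Prop :=
  (∀ v, ℓ v ≤ ℓ v₀) ∧ ∀ i < ℓ v₀, ∃ v, ℓ v = i

variable [Fintype V] {v₀ : V} {ℓ : V → ℕ}

theorem IsLayering.lt_card (hℓ : IsLayering v₀ ℓ) : ℓ v₀ < Fintype.card V := by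
  have hsub : range (ℓ v₀ + 1) ⊆ univ.image ℓ := by
    intro i hi
    rcases (Nat.lt_succ_iff.1 (mem_range.1 hi)).lt_or_eq with hi | rfl
    · obtain ⟨v, hv⟩ := hℓ.2 i hi
      exact mem_image.2 ⟨v, mem_univ v, hv⟩
    · exact mem_image_of_mem ℓ (mem_univ v₀)
  simpa using (card_le_card hsub).trans card_image_le

variable (v₀) in
noncomputable def layerings : Finset (V → ℕ) :=
  (Fintype.piFinset fun _ => range (Fintype.card V)).filter (IsLayering v₀)

theorem mem_layerings : ℓ ∈ layerings v₀ ↔ IsLayering v₀ ℓ :=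
  mem_filter.trans ⟨And.right, fun hℓ =>
    ⟨Fintype.mem_piFinset.2 fun v => mem_range.2 ((hℓ.1 v).trans_lt hℓ.lt_card), hℓ⟩⟩

end Layering

noncomputable def weakAscents [Fintype E] (tail head : E → V) (ℓ : V → ℕ) : Finset E :=
  univ.filter fun e => ℓ (tail e) ≤ ℓ (head e)

theorem subset_weakAscents_iff [Fintype E] {tail head : E → V} {ℓ : V → ℕ} {S : Finset E} :
    S ⊆ weakAscents tail head ℓ ↔ ∀ e ∈ S, ℓ (tail e) ≤ ℓ (head e) := by
  simp [weakAscents, subset_iff]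

section SignedSum

variable [Fintype E] {tail head : E → V} {v₀ : V} {S : Finset E} {ℓ : V → ℕ}

theorem filter_layerings_eq_singleton_zero [Fintype V] (hS : RootConnected tail head v₀ S) :
    (layerings v₀).filter (S ⊆ weakAscents tail head ·) = {0} := by
  ext ℓ
  simp only [mem_filter, mem_layerings, subset_weakAscents_iff, mem_singleton]
  constructor
  · rintro ⟨⟨hle, hocc⟩, hasc⟩
    have hconst v : ℓ v = ℓ v₀ := le_antisymm (hle v) ((hS v).le_of_forall_le hasc)
    have htop : ℓ v₀ = 0 := by
      by_contra h0
      obtain ⟨v, hv⟩ := hocc 0 (Nat.pos_of_ne_zero h0)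
      exact h0 (hconst v ▸ hv)
    funext v
    rw [hconst v, htop, Pi.zero_apply]
  · rintro rfl
    exact ⟨⟨fun _ => le_rfl, fun i hi => absurd hi (Nat.not_lt_zero i)⟩, fun _ _ => le_rfl⟩

theorem eq_of_reachable (hℓ : IsLayering v₀ ℓ) (hasc : ∀ e ∈ S, ℓ (tail e) ≤ ℓ (head e)) {v : V}
    (hv : ReachableIn tail head S v₀ v) : ℓ v = ℓ v₀ :=
  le_antisymm (hℓ.1 v) (hv.le_of_forall_le hasc)

theorem exists_not_reachable_of_lt (hℓ : IsLayering v₀ ℓ)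
    (hasc : ∀ e ∈ S, ℓ (tail e) ≤ ℓ (head e)) {i : ℕ} (hi : i < ℓ v₀) :
    ∃ v, ¬ReachableIn tail head S v₀ v ∧ ℓ v = i := by
  obtain ⟨v, hv⟩ := hℓ.2 i hi
  exact ⟨v, fun hr => by rw [eq_of_reachable hℓ hasc hr] at hv; omega, hv⟩

variable (tail head v₀ S) in
noncomputable def setReachable (m : ℕ) (ℓ : V → ℕ) : V → ℕ := fun v =>
  if ReachableIn tail head S v₀ v then m else ℓ v

theorem setReachable_of_reachable {m : ℕ} {v : V} (hv : ReachableIn tail head S v₀ v) :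
    setReachable tail head v₀ S m ℓ v = m :=
  if_pos hv

theorem setReachable_root {m : ℕ} : setReachable tail head v₀ S m ℓ v₀ = m :=
  setReachable_of_reachable Relation.ReflTransGen.refl

theorem setReachable_of_not_reachable {m : ℕ} {v : V} (hv : ¬ReachableIn tail head S v₀ v) :
    setReachable tail head v₀ S m ℓ v = ℓ v :=
  if_neg hv

theorem isLayering_setReachable {m : ℕ}
    (hle : ∀ v, ¬ReachableIn tail head S v₀ v → ℓ v ≤ m)
    (hocc : ∀ i < m, ∃ v, ¬ReachableIn tail head S v₀ v ∧ ℓ v = i)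
    (hasc : ∀ e ∈ S, ℓ (tail e) ≤ ℓ (head e)) :
    IsLayering v₀ (setReachable tail head v₀ S m ℓ) ∧ ∀ e ∈ S,
      setReachable tail head v₀ S m ℓ (tail e) ≤ setReachable tail head v₀ S m ℓ (head e) := by
  refine ⟨⟨fun v => ?_, fun i hi => ?_⟩, fun e he => ?_⟩
  · rw [setReachable_root]
    by_cases hv : ReachableIn tail head S v₀ v
    · simp [setReachable, hv]
    · exact (setReachable_of_not_reachable hv).trans_le (hle v hv)
  · rw [setReachable_root] at hi
    obtain ⟨v, hv, hvi⟩ := hocc i hi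
    exact ⟨v, (setReachable_of_not_reachable hv).trans hvi⟩
  · by_cases ht : ReachableIn tail head S v₀ (tail e)
    · have hh : ReachableIn tail head S v₀ (head e) := ht.tail ⟨e, he, rfl, rfl⟩
      simp [setReachable, ht, hh]
    · rw [setReachable_of_not_reachable ht]
      by_cases hh : ReachableIn tail head S v₀ (head e)
      · simpa [setReachable, hh] using hle _ ht
      · simpa [setReachable_of_not_reachable hh] using hasc e he

variable (tail head v₀ S) in
def TopShared (ℓ : V → ℕ) : Prop :=
  ∃ u, ¬ReachableIn tail head S v₀ u ∧ ℓ u = ℓ v₀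

variable (tail head v₀ S) in
/-- The vertices reachable from `v₀` along `S` are split off into a new top layer if they share
theirs with other vertices, and are merged into the layer below otherwise. -/
noncomputable def toggle (ℓ : V → ℕ) : V → ℕ :=
  setReachable tail head v₀ S (if TopShared tail head v₀ S ℓ then ℓ v₀ + 1 else ℓ v₀ - 1) ℓ

theorem toggle_root :
    toggle tail head v₀ S ℓ v₀ = if TopShared tail head v₀ S ℓ then ℓ v₀ + 1 else ℓ v₀ - 1 :=
  setReachable_root

theorem one_le_of_not_topShared (hS : ¬RootConnected tail head v₀ S) (hℓ : IsLayering v₀ ℓ)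
    (hshared : ¬TopShared tail head v₀ S ℓ) : 1 ≤ ℓ v₀ := by
  obtain ⟨v, hv⟩ := not_forall.1 hS
  have := hℓ.1 v
  have : ℓ v ≠ ℓ v₀ := fun h => hshared ⟨v, hv, h⟩
  omega

theorem toggle_mem_and_topShared_iff (hS : ¬RootConnected tail head v₀ S) (hℓ : IsLayering v₀ ℓ)
    (hasc : ∀ e ∈ S, ℓ (tail e) ≤ ℓ (head e)) :
    (IsLayering v₀ (toggle tail head v₀ S ℓ) ∧
      ∀ e ∈ S, toggle tail head v₀ S ℓ (tail e) ≤ toggle tail head v₀ S ℓ (head e)) ∧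
    (TopShared tail head v₀ S (toggle tail head v₀ S ℓ) ↔ ¬TopShared tail head v₀ S ℓ) := by
  unfold toggle
  by_cases hshared : TopShared tail head v₀ S ℓ
  · rw [if_pos hshared, iff_false_intro (not_not_intro hshared), iff_false]
    refine ⟨isLayering_setReachable (fun v _ => (hℓ.1 v).trans (Nat.le_succ _))
      (fun i hi => ?_) hasc, ?_⟩
    · rcases (Nat.lt_succ_iff.1 hi).lt_or_eq with hi | rfl
      exacts [exists_not_reachable_of_lt hℓ hasc hi, hshared]
    · rintro ⟨u, hu, hu'⟩
      rw [setReachable_of_not_reachable hu, setReachable_root] at hu'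
      have := hℓ.1 u
      omega
  · have hpos := one_le_of_not_topShared hS hℓ hshared
    rw [if_neg hshared, iff_true_intro hshared, iff_true]
    refine ⟨isLayering_setReachable (fun v hv => ?_)
      (fun i hi => exists_not_reachable_of_lt hℓ hasc (by omega)) hasc, ?_⟩
    · have := hℓ.1 v
      have : ℓ v ≠ ℓ v₀ := fun h => hshared ⟨v, hv, h⟩
      omega
    · obtain ⟨u, hu, hu'⟩ := exists_not_reachable_of_lt hℓ hasc (i := ℓ v₀ - 1) (by omega)
      exact ⟨u, hu, by rw [setReachable_of_not_reachable hu, setReachable_root, hu']⟩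

theorem toggle_toggle (hS : ¬RootConnected tail head v₀ S) (hℓ : IsLayering v₀ ℓ)
    (hasc : ∀ e ∈ S, ℓ (tail e) ≤ ℓ (head e)) :
    toggle tail head v₀ S (toggle tail head v₀ S ℓ) = ℓ := by
  have hiff := (toggle_mem_and_topShared_iff hS hℓ hasc).2
  funext v
  by_cases hv : ReachableIn tail head S v₀ v
  · rw [toggle, setReachable_of_reachable hv, eq_of_reachable hℓ hasc hv, toggle_root]
    by_cases hshared : TopShared tail head v₀ S ℓ
    · simp [hiff, hshared]
    · have := one_le_of_not_topShared hS hℓ hshared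
      simp only [hiff, hshared, if_true, if_false, not_false_iff]
      omega
  · rw [toggle, setReachable_of_not_reachable hv, toggle, setReachable_of_not_reachable hv]

theorem toggle_root_eq_add_one_or (hS : ¬RootConnected tail head v₀ S) (hℓ : IsLayering v₀ ℓ) :
    toggle tail head v₀ S ℓ v₀ = ℓ v₀ + 1 ∨ toggle tail head v₀ S ℓ v₀ + 1 = ℓ v₀ := by
  rw [toggle_root]
  by_cases hshared : TopShared tail head v₀ S ℓ
  · exact .inl (if_pos hshared)
  · have := one_le_of_not_topShared hS hℓ hshared
    rw [if_neg hshared]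
    omega

theorem sum_filter_layerings_neg_one_pow [Fintype V] {R : Type*} [Ring R] (S : Finset E) :
    ∑ ℓ ∈ (layerings v₀).filter (S ⊆ weakAscents tail head ·), (-1 : R) ^ ℓ v₀ =
      if RootConnected tail head v₀ S then 1 else 0 := by
  split_ifs with hS
  · rw [filter_layerings_eq_singleton_zero hS, sum_singleton, Pi.zero_apply, pow_zero]
  have hmem {ℓ : V → ℕ} : ℓ ∈ (layerings v₀).filter (S ⊆ weakAscents tail head ·) ↔
      IsLayering v₀ ℓ ∧ ∀ e ∈ S, ℓ (tail e) ≤ ℓ (head e) := by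
    rw [mem_filter, mem_layerings, subset_weakAscents_iff]
  refine sum_involution (fun ℓ _ => toggle tail head v₀ S ℓ) (fun ℓ hℓ => ?_) (fun ℓ hℓ _ => ?_)
    (fun ℓ hℓ => hmem.2 (toggle_mem_and_topShared_iff hS (hmem.1 hℓ).1 (hmem.1 hℓ).2).1)
    (fun ℓ hℓ => toggle_toggle hS (hmem.1 hℓ).1 (hmem.1 hℓ).2)
  · rcases toggle_root_eq_add_one_or hS (hmem.1 hℓ).1 with h | h
    · simp [h, pow_succ]
    · simp [← h, pow_succ]
  · intro h
    have := toggle_root_eq_add_one_or hS (hmem.1 hℓ).1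
    rw [h] at this
    omega

theorem sum_rootConnected_eq_sum_layerings [Fintype V] {R : Type*} [Ring R] (w : ℕ → R) :
    ∑ S ∈ univ.filter (RootConnected tail head v₀), w #S =
      ∑ ℓ ∈ layerings v₀, (-1) ^ ℓ v₀ * ∑ S ∈ (weakAscents tail head ℓ).powerset, w #S := by
  calc ∑ S ∈ univ.filter (RootConnected tail head v₀), w #S
      = ∑ S, ∑ ℓ ∈ (layerings v₀).filter (S ⊆ weakAscents tail head ·), (-1) ^ ℓ v₀ * w #S := by
        rw [sum_filter]
        refine sum_congr rfl fun S _ => ?_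
        rw [← sum_mul, sum_filter_layerings_neg_one_pow, ite_mul, one_mul, zero_mul]
    _ = ∑ ℓ ∈ layerings v₀, ∑ S ∈ univ.filter (· ⊆ weakAscents tail head ℓ),
          (-1) ^ ℓ v₀ * w #S := by
        simp_rw [sum_filter]
        exact sum_comm
    _ = _ := by
        simp_rw [mul_sum]
        refine sum_congr rfl fun ℓ _ => sum_congr (by ext; simp) fun _ _ => rfl

end SignedSum

section Reversal

variable [Fintype E] {tail head : E → V}

variable (tail head) in
def IsBalanced : Prop :=
  ∀ v : V, {e : E | head e = v}.ncard = {e : E | tail e = v}.ncard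

theorem IsBalanced.card_filter_head_mem_eq (hbal : IsBalanced tail head) (A : Finset V) :
    #{e | head e ∈ A} = #{e | tail e ∈ A} := by
  rw [← sum_card_fiberwise_eq_card_filter, ← sum_card_fiberwise_eq_card_filter]
  refine sum_congr rfl fun v _ => ?_
  simpa [Set.ncard_eq_toFinset_card'] using hbal v

def reflectBelowTop (v₀ : V) (ℓ : V → ℕ) : V → ℕ := fun v =>
  if ℓ v = ℓ v₀ then ℓ v else ℓ v₀ - 1 - ℓ v

variable {v₀ : V} {ℓ : V → ℕ}

theorem reflectBelowTop_root : reflectBelowTop v₀ ℓ v₀ = ℓ v₀ := if_pos rfl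

theorem isLayering_reflectBelowTop (hℓ : IsLayering v₀ ℓ) :
    IsLayering v₀ (reflectBelowTop v₀ ℓ) := by
  refine ⟨fun v => ?_, fun i hi => ?_⟩
  · rw [reflectBelowTop_root, reflectBelowTop]
    split_ifs <;> omega
  · rw [reflectBelowTop_root] at hi
    obtain ⟨v, hv⟩ := hℓ.2 (ℓ v₀ - 1 - i) (by omega)
    exact ⟨v, by rw [reflectBelowTop, if_neg (by omega)]; omega⟩

theorem reflectBelowTop_reflectBelowTop (hℓ : IsLayering v₀ ℓ) :
    reflectBelowTop v₀ (reflectBelowTop v₀ ℓ) = ℓ := by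
  funext v
  have := hℓ.1 v
  simp only [reflectBelowTop]
  split_ifs <;> omega

theorem card_weakAscents_reflectBelowTop [Fintype V] (hbal : IsBalanced tail head)
    (hℓ : IsLayering v₀ ℓ) :
    #(weakAscents head tail (reflectBelowTop v₀ ℓ)) = #(weakAscents tail head ℓ) := by
  -- as weak ascents, the edges entering the top layer are traded for those leaving it
  set top : Finset V := {v | ℓ v = ℓ v₀} with htop
  have key : #(weakAscents head tail (reflectBelowTop v₀ ℓ)) + #{e | head e ∈ top} =
      #(weakAscents tail head ℓ) + #{e | tail e ∈ top} := by
    simp only [weakAscents, card_filter, ← sum_add_distrib]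
    refine sum_congr rfl fun e _ => ?_
    have := hℓ.1 (tail e)
    have := hℓ.1 (head e)
    simp only [reflectBelowTop, htop, mem_filter, mem_univ, true_and]
    split_ifs <;> omega
  rw [hbal.card_filter_head_mem_eq] at key
  omega

variable (v₀) in
theorem sum_layerings_weakAscents_reverse [Fintype V] {R : Type*} [Ring R]
    (hbal : IsBalanced tail head) (g : ℕ → R) :
    ∑ ℓ ∈ layerings v₀, (-1) ^ ℓ v₀ * g #(weakAscents tail head ℓ) =
      ∑ ℓ ∈ layerings v₀, (-1) ^ ℓ v₀ * g #(weakAscents head tail ℓ) := by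
  refine sum_nbij' (reflectBelowTop v₀) (reflectBelowTop v₀) (fun ℓ hℓ => ?_) (fun ℓ hℓ => ?_)
    (fun ℓ hℓ => ?_) (fun ℓ hℓ => ?_) (fun ℓ hℓ => ?_) <;> rw [mem_layerings] at hℓ
  · exact mem_layerings.2 (isLayering_reflectBelowTop hℓ)
  · exact mem_layerings.2 (isLayering_reflectBelowTop hℓ)
  · exact reflectBelowTop_reflectBelowTop hℓ
  · exact reflectBelowTop_reflectBelowTop hℓ
  · rw [reflectBelowTop_root, card_weakAscents_reflectBelowTop hbal hℓ]

end Reversal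

theorem sum_rootConnected_reverse [Fintype V] [Fintype E] {tail head : E → V}
    (hbal : IsBalanced tail head) (v₀ : V)
    {R : Type*} [Ring R] (w : ℕ → R) :
    ∑ S ∈ univ.filter (RootConnected tail head v₀), w #S =
      ∑ S ∈ univ.filter (RootConnected head tail v₀), w #S := by
  simp_rw [sum_rootConnected_eq_sum_layerings (R := R), sum_powerset_apply_card]
  exact sum_layerings_weakAscents_reverse v₀ hbal fun n => ∑ m ∈ range (n + 1), n.choose m • w m

end BranchingGreedoid

open BranchingGreedoid in
theorem greedoid_polynomial_reversal_invariant_general [Fintype V] [Fintype E]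
    (tail head : E → V)
    (hEul : ∀ v : V, {e : E | head e = v}.ncard = {e : E | tail e = v}.ncard)
    (v₀ : V) :
    ∀ x : ℝ, greedoidPolyEval tail head v₀ x = greedoidPolyEval head tail v₀ x := by
  intro x
  rw [greedoidPolyEval_eq_sum_rootConnected, greedoidPolyEval_eq_sum_rootConnected]
  exact sum_rootConnected_reverse hEul v₀ fun n => (x - 1) ^ (n + 1 - Fintype.card V)

/-- For a connected Eulerian digraph `G`, reversing the orientation of
every edge does not change the greedoid polynomial of the directed branching greedoid
rooted at any fixed vertex `v₀`. -/
theorem greedoid_polynomial_reversal_invariant [Fintype V] [Fintype E]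
    (tail head : E → V)
    (hconn : ∀ u v : V, Relation.ReflTransGen
      (fun a b => ∃ e : E, (tail e = a ∧ head e = b) ∨ (tail e = b ∧ head e = a)) u v)
    (hEul : ∀ v : V, {e : E | head e = v}.ncard = {e : E | tail e = v}.ncard)
    (v₀ : V) :
    ∀ x : ℝ, greedoidPolyEval tail head v₀ x = greedoidPolyEval head tail v₀ x :=
  greedoid_polynomial_reversal_invariant_general tail head hEul v₀

end
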